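/- Let μ denote the surface measure on the unit sphere 𝕊² ⊂ ℝ³ and let k be a symmetric 3×3 real matrix. For all indices s, l ∈ {1, 2, 3}, ∫_{𝕊²} ⟨kx, x⟩² x^s xˡ dμ(x) = (4π/105) · ( ((tr k)² + 2‖k‖²) δ_{sl} + 4 (tr k) k_{sl} + 8 (k²)_{sl} ), where ‖k‖² = Σ_{i,j} k_{ij}² is the squared Frobenius norm and (k²)_{sl} = Σ_t k_{st} k_{tl}. -/

import Mathlib

/-!
Integrate `P x = ⟨kx, x⟩² xˢ xˡ` against `exp (-‖x‖²)` over `ℝ³` in two ways. As `P` is homogeneous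
of degree 6, polar coordinates give `(∫_{𝕊²} P) * ∫₀^∞ r⁸ e^{-r²} dr = (105 √π / 32) ∫_{𝕊²} P`.
In Cartesian coordinates the Gaussian factorises, so expanding `P` into monomials reduces the
integral to products of the one-dimensional moments `∫ xⁿ e^{-x²} dx`, which vanish for odd `n`
and equal `Γ ((n + 1) / 2)` for even `n`.
-/

open MeasureTheory Real

/-- The surface measure on the unit sphere `𝕊² ⊂ ℝ³`, viewed as a measure on the
ambient space `ℝ³` supported on the sphere (induced from Lebesgue measure). -/
noncomputable def sphereMeasure2 : Measure (EuclideanSpace ℝ (Fin 3)) :=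
  Measure.map Subtype.val ((volume : Measure (EuclideanSpace ℝ (Fin 3))).toSphere)

/-- The quadratic form `⟨kx, x⟩ = Σ_{i,j} k_{ij} xⁱ xʲ` of a matrix. -/
def quadForm (k : Matrix (Fin 3) (Fin 3) ℝ) (x : EuclideanSpace ℝ (Fin 3)) : ℝ :=
  ∑ i, ∑ j, k i j * x i * x j

open Set Metric Module

noncomputable def gaussMoment (n : ℕ) : ℝ := ∫ x : ℝ, x ^ n * exp (-x ^ 2)

theorem integrable_pow_mul_exp_neg_sq (n : ℕ) :
    Integrable fun x : ℝ => x ^ n * exp (-x ^ 2) := by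
  simpa using integrable_rpow_mul_exp_neg_mul_sq one_pos
    (Nat.cast_nonneg' n |>.trans_lt' neg_one_lt_zero)

theorem integral_Ioi_pow_mul_exp_neg_sq (n : ℕ) :
    ∫ x in Ioi 0, x ^ n * exp (-x ^ 2) = Gamma ((n + 1) / 2) / 2 := by
  have h := integral_rpow_mul_exp_neg_rpow two_pos
    (Nat.cast_nonneg' n |>.trans_lt' neg_one_lt_zero)
  simp only [rpow_natCast, rpow_ofNat] at h
  rw [h]
  ring

theorem integral_Iic_pow_mul_exp_neg_sq (n : ℕ) :
    ∫ x in Iic 0, x ^ n * exp (-x ^ 2) = (-1) ^ n * ∫ x in Ioi 0, x ^ n * exp (-x ^ 2) := by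
  have h := integral_comp_neg_Ioi 0 fun x : ℝ => x ^ n * exp (-x ^ 2)
  rw [neg_zero] at h
  rw [← h, ← integral_const_mul]
  congr with x
  rw [neg_pow, neg_sq, mul_assoc]

theorem gaussMoment_eq_mul_integral_Ioi (n : ℕ) :
    gaussMoment n = (1 + (-1) ^ n) * ∫ x in Ioi 0, x ^ n * exp (-x ^ 2) := by
  rw [gaussMoment, ← intervalIntegral.integral_Iic_add_Ioi
    (integrable_pow_mul_exp_neg_sq n).integrableOn (integrable_pow_mul_exp_neg_sq n).integrableOn,
    integral_Iic_pow_mul_exp_neg_sq]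
  ring

theorem gaussMoment_of_odd {n : ℕ} (hn : Odd n) : gaussMoment n = 0 := by
  simp [gaussMoment_eq_mul_integral_Ioi, hn.neg_one_pow]

theorem integral_Ioi_pow_mul_exp_neg_sq_of_even {n : ℕ} (hn : Even n) :
    ∫ x in Ioi 0, x ^ n * exp (-x ^ 2) = gaussMoment n / 2 := by
  rw [gaussMoment_eq_mul_integral_Ioi, hn.neg_one_pow]
  ring

theorem gaussMoment_of_even {n : ℕ} (hn : Even n) : gaussMoment n = Gamma ((n + 1) / 2) := by
  have h := integral_Ioi_pow_mul_exp_neg_sq_of_even hn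
  rw [integral_Ioi_pow_mul_exp_neg_sq] at h
  linarith

theorem gaussMoment_add_two (n : ℕ) : gaussMoment (n + 2) = (n + 1) / 2 * gaussMoment n := by
  rcases n.even_or_odd with hn | hn
  · rw [gaussMoment_of_even hn, gaussMoment_of_even (hn.add even_two),
      ← Gamma_add_one (by positivity)]
    push_cast
    ring_nf
  · rw [gaussMoment_of_odd hn, gaussMoment_of_odd (hn.add_even even_two), mul_zero]

theorem gaussMoment_zero : gaussMoment 0 = √π := by
  rw [gaussMoment_of_even (n := 0) (by decide)]
  simpa using Gamma_one_half_eq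

theorem gaussMoment_two : gaussMoment 2 = √π / 2 := by
  rw [gaussMoment_add_two 0, gaussMoment_zero]
  ring

theorem gaussMoment_four : gaussMoment 4 = 3 / 4 * √π := by
  rw [gaussMoment_add_two 2, gaussMoment_two]
  ring

theorem gaussMoment_six : gaussMoment 6 = 15 / 8 * √π := by
  rw [gaussMoment_add_two 4, gaussMoment_four]
  ring

theorem gaussMoment_eight : gaussMoment 8 = 105 / 16 * √π := by
  rw [gaussMoment_add_two 6, gaussMoment_six]
  ring

theorem integral_volumeIoiPow (n : ℕ) (f : ℝ → ℝ) :
    ∫ r, f r ∂Measure.volumeIoiPow n = ∫ r in Ioi 0, r ^ n * f r := by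
  simp only [Measure.volumeIoiPow, ENNReal.ofReal]
  rw [integral_withDensity_eq_integral_smul (measurable_subtype_coe.pow_const _).real_toNNReal,
    integral_subtype_comap measurableSet_Ioi fun r => (r ^ n).toNNReal • f r]
  refine setIntegral_congr_fun measurableSet_Ioi fun r hr => ?_
  rw [NNReal.smul_def, coe_toNNReal _ (pow_nonneg hr.out.le _), smul_eq_mul]

theorem integral_mul_comp_norm_of_homogeneous {E : Type*} [NormedAddCommGroup E]
    [NormedSpace ℝ E] [FiniteDimensional ℝ E] [MeasurableSpace E] [BorelSpace E] [Nontrivial E]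
    (μ : Measure E) [μ.IsAddHaarMeasure] {P : E → ℝ} {d : ℕ}
    (hP : ∀ c : ℝ, 0 < c → ∀ x, P (c • x) = c ^ d * P x) (g : ℝ → ℝ) :
    ∫ x, P x * g ‖x‖ ∂μ =
      (∫ ω, P ω ∂μ.toSphere) * ∫ r in Ioi 0, r ^ (d + (finrank ℝ E - 1)) * g r := by
  have hpolar (x : E) (hx : x ≠ 0) : P x * g ‖x‖ = P (‖x‖⁻¹ • x) * (‖x‖ ^ d * g ‖x‖) := by
    have hn : 0 < ‖x‖ := norm_pos_iff.2 hx
    have h := hP ‖x‖ hn (‖x‖⁻¹ • x)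
    rw [smul_inv_smul₀ hn.ne'] at h
    rw [h]
    ring
  calc ∫ x, P x * g ‖x‖ ∂μ
      = ∫ x : ({0}ᶜ : Set E), P x * g ‖(x : E)‖ ∂μ.comap Subtype.val := by
        rw [integral_subtype_comap (measurableSet_singleton _).compl fun x => P x * g ‖x‖,
          restrict_compl_singleton]
    _ = ∫ p : sphere (0 : E) 1 × Ioi (0 : ℝ), P p.1 * (p.2.1 ^ d * g p.2)
          ∂μ.toSphere.prod (.volumeIoiPow (finrank ℝ E - 1)) := by
        rw [← μ.measurePreserving_homeomorphUnitSphereProd.integral_comp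
          (Homeomorph.measurableEmbedding _)]
        refine integral_congr_ae (.of_forall fun x => ?_)
        simpa only [homeomorphUnitSphereProd_apply_fst_coe, homeomorphUnitSphereProd_apply_snd_coe]
          using hpolar x x.2
    _ = (∫ ω, P ω ∂μ.toSphere) *
          ∫ r : Ioi (0 : ℝ), r.1 ^ d * g r ∂.volumeIoiPow (finrank ℝ E - 1) :=
        integral_prod_mul (fun ω : sphere (0 : E) 1 => P ω) fun r : Ioi (0 : ℝ) => r.1 ^ d * g r
    _ = _ := by
        rw [integral_volumeIoiPow _ fun r => r ^ d * g r]
        congr 2 with r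
        ring

theorem List.prod_map_eq_prod_univ_pow_count {ι M : Type*} [Fintype ι] [DecidableEq ι]
    [CommMonoid M] (L : List ι) (f : ι → M) :
    (L.map f).prod = ∏ t, f t ^ L.count t := by
  rw [Finset.prod_list_map_count]
  exact Finset.prod_subset (Finset.subset_univ _) fun t _ ht => by
    rw [List.count_eq_zero_of_not_mem (by simpa using ht), pow_zero]

section GaussianMonomial

variable {ι : Type*} [Fintype ι]

theorem prod_pow_mul_exp_neg_norm_sq (a : ι → ℕ) (x : EuclideanSpace ℝ ι) :
    (∏ t, x t ^ a t) * exp (-‖x‖ ^ 2) = ∏ t, x t ^ a t * exp (-x t ^ 2) := by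
  rw [EuclideanSpace.norm_sq_eq, ← Finset.sum_neg_distrib, exp_sum, ← Finset.prod_mul_distrib]
  simp only [norm_eq_abs, sq_abs]

@[fun_prop]
theorem integrable_prod_pow_mul_exp_neg_norm_sq (a : ι → ℕ) :
    Integrable fun x : EuclideanSpace ℝ ι => (∏ t, x t ^ a t) * exp (-‖x‖ ^ 2) := by
  simp_rw [prod_pow_mul_exp_neg_norm_sq]
  rw [← (PiLp.volume_preserving_toLp ι).integrable_comp_emb
    (MeasurableEquiv.toLp 2 _).measurableEmbedding]
  exact Integrable.fintype_prod (f := fun t (y : ℝ) => y ^ a t * exp (-y ^ 2))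
    fun t => integrable_pow_mul_exp_neg_sq _

theorem integral_prod_pow_mul_exp_neg_norm_sq (a : ι → ℕ) :
    ∫ x : EuclideanSpace ℝ ι, (∏ t, x t ^ a t) * exp (-‖x‖ ^ 2) = ∏ t, gaussMoment (a t) := by
  simp_rw [prod_pow_mul_exp_neg_norm_sq]
  rw [← (PiLp.volume_preserving_toLp ι).integral_comp
    (MeasurableEquiv.toLp 2 _).measurableEmbedding]
  exact integral_fintype_prod_volume_eq_prod fun t (y : ℝ) => y ^ a t * exp (-y ^ 2)

end GaussianMonomial

theorem quadForm_smul (k : Matrix (Fin 3) (Fin 3) ℝ) (c : ℝ) (x : EuclideanSpace ℝ (Fin 3)) :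
    quadForm k (c • x) = c ^ 2 * quadForm k x := by
  simp only [quadForm, PiLp.smul_apply, smul_eq_mul, Finset.mul_sum]
  exact Fintype.sum_congr _ _ fun i => Fintype.sum_congr _ _ fun j => by ring

theorem quadForm_sq_mul_mul (k : Matrix (Fin 3) (Fin 3) ℝ) (s l : Fin 3)
    (x : EuclideanSpace ℝ (Fin 3)) :
    quadForm k x ^ 2 * x s * x l =
      ∑ i, ∑ j, ∑ p, ∑ q, k i j * k p q * ∏ t, x t ^ [i, j, p, q, s, l].count t := by
  simp only [← List.prod_map_eq_prod_univ_pow_count, List.map_cons, List.map_nil, List.prod_cons,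
    List.prod_nil, quadForm, sq, Finset.sum_mul, Finset.mul_sum]
  exact Fintype.sum_congr _ _ fun i => Fintype.sum_congr _ _ fun j =>
    Fintype.sum_congr _ _ fun p => Fintype.sum_congr _ _ fun q => by ring

theorem integral_quadForm_sq_mul_mul_exp_neg_norm_sq (k : Matrix (Fin 3) (Fin 3) ℝ)
    (s l : Fin 3) :
    ∫ x : EuclideanSpace ℝ (Fin 3), quadForm k x ^ 2 * x s * x l * exp (-‖x‖ ^ 2) =
      ∑ i, ∑ j, ∑ p, ∑ q, k i j * k p q * ∏ t, gaussMoment ([i, j, p, q, s, l].count t) := by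
  simp_rw [quadForm_sq_mul_mul, Finset.sum_mul, mul_assoc]
  refine (integral_finsetSum _ fun i _ => by fun_prop).trans (Fintype.sum_congr _ _ fun i => ?_)
  refine (integral_finsetSum _ fun j _ => by fun_prop).trans (Fintype.sum_congr _ _ fun j => ?_)
  refine (integral_finsetSum _ fun p _ => by fun_prop).trans (Fintype.sum_congr _ _ fun p => ?_)
  refine (integral_finsetSum _ fun q _ => by fun_prop).trans (Fintype.sum_congr _ _ fun q => ?_)
  rw [integral_const_mul, integral_const_mul, integral_prod_pow_mul_exp_neg_norm_sq]

/- Only even exponents contribute; a sixth moment `∏ t, gaussMoment (a t)` with all `a t` even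
is `√π ^ 3 / 8` times `15`, `3` or `1` for the exponent patterns `(6,0,0)`, `(4,2,0)`, `(2,2,2)`:
the number of pairings of six indices compatible with the pattern. -/
theorem sum_mul_prod_gaussMoment_count (k : Matrix (Fin 3) (Fin 3) ℝ) (hk : k.IsSymm)
    (s l : Fin 3) :
    ∑ i, ∑ j, ∑ p, ∑ q, k i j * k p q * ∏ t, gaussMoment ([i, j, p, q, s, l].count t) =
      π * √π / 8 *
        ((k.trace ^ 2 + 2 * ∑ i, ∑ j, (k i j) ^ 2) * (if s = l then 1 else 0) +
          4 * k.trace * k s l + 8 * ∑ t, k s t * k t l) := by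
  have h10 : k 1 0 = k 0 1 := congrFun (congrFun hk 0) 1
  have h20 : k 2 0 = k 0 2 := congrFun (congrFun hk 0) 2
  have h21 : k 2 1 = k 1 2 := congrFun (congrFun hk 1) 2
  have h1 : gaussMoment 1 = 0 := gaussMoment_of_odd (by decide)
  have h3 : gaussMoment 3 = 0 := gaussMoment_of_odd (by decide)
  have h5 : gaussMoment 5 = 0 := gaussMoment_of_odd (by decide)
  rw [show π * √π = √π ^ 3 by rw [pow_succ, sq_sqrt pi_pos.le]]
  fin_cases s <;> fin_cases l <;>
  · simp only [Fin.sum_univ_three, Fin.prod_univ_three, Matrix.trace, Matrix.diag_apply,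
      List.count_cons, List.count_nil, beq_iff_eq, Fin.isValue, Fin.zero_eta, Fin.mk_one,
      Fin.reduceFinMk, Fin.reduceEq, ↓reduceIte, Nat.reduceAdd, zero_add, add_zero, zero_mul,
      mul_zero, mul_one, h1, h3, h5, gaussMoment_zero, gaussMoment_two, gaussMoment_four,
      gaussMoment_six, h10, h20, h21]
    ring

theorem integral_sphereMeasure2 (f : EuclideanSpace ℝ (Fin 3) → ℝ) :
    ∫ x, f x ∂sphereMeasure2 = ∫ ω, f ω ∂(volume : Measure (EuclideanSpace ℝ (Fin 3))).toSphere :=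
  (MeasurableEmbedding.subtype_coe isClosed_sphere.measurableSet).integral_map _

/-- For a symmetric `3×3` matrix `k` and indices `s, l`:
`∫_{𝕊²} ⟨kx,x⟩² x^s xˡ dμ
  = (4π/105) (((tr k)² + 2‖k‖²) δ_{sl} + 4 (tr k) k_{sl} + 8 (k²)_{sl})`. -/
theorem sphere_quadlinear_moment (k : Matrix (Fin 3) (Fin 3) ℝ) (hk : k.IsSymm)
    (s l : Fin 3) :
    ∫ x, quadForm k x ^ 2 * x s * x l ∂sphereMeasure2 =
      4 * π / 105 *
        ((k.trace ^ 2 + 2 * ∑ i, ∑ j, (k i j) ^ 2) * (if s = l then 1 else 0) +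
          4 * k.trace * k s l + 8 * ∑ t, k s t * k t l) := by
  have hhom (c : ℝ) (_ : 0 < c) (x : EuclideanSpace ℝ (Fin 3)) :
      quadForm k (c • x) ^ 2 * (c • x) s * (c • x) l = c ^ 6 * (quadForm k x ^ 2 * x s * x l) := by
    simp only [quadForm_smul, PiLp.smul_apply, smul_eq_mul]
    ring
  have hradial : ∫ r in Ioi 0, r ^ (6 + (finrank ℝ (EuclideanSpace ℝ (Fin 3)) - 1)) *
      exp (-r ^ 2) = 105 / 32 * √π := by
    rw [finrank_euclideanSpace_fin, integral_Ioi_pow_mul_exp_neg_sq_of_even (by decide),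
      gaussMoment_eight]
    ring
  have hpolar := integral_mul_comp_norm_of_homogeneous volume
    (P := fun x => quadForm k x ^ 2 * x s * x l) hhom fun r => exp (-r ^ 2)
  beta_reduce at hpolar
  rw [integral_quadForm_sq_mul_mul_exp_neg_norm_sq, sum_mul_prod_gaussMoment_count k hk,
    hradial] at hpolar
  rw [integral_sphereMeasure2]
  refine mul_right_cancel₀ (b := 105 / 32 * √π) (by positivity) ?_
  rw [← hpolar]
  ring
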